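/- arXiv:2410.15249 — 3 statements merged into one kernel-verified Lean document; each statement's English description precedes it below -/
import Mathlib

section
/- With the same setup, the functional y ↦ ∫₀^{θ(y)} L⁺(y_t) dt is upper semicontinuous on the path space 𝒴 = {y : [0,∞)→ℝ^d : 1-Lipschitz, θ(y) := inf{t : y_t ∈ Γ} < ∞, y constant after θ}, equipped with the metric d(y,ŷ) = ‖y−ŷ‖_∞ + |θ(y)−θ(ŷ)|. That is, if y^n → y in this metric, then ∫₀^{θ(y)} L⁺(y_t)dt ≥ limsup_n ∫₀^{θ(y^n)} L⁺(y^n_t)dt. -/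
/-!
The integrand `1_{(0, θ(yⁿ)]}(t) L⁺(yⁿ_t)` is eventually dominated by `M · 1_{(0, θ(y) + 1]}`,
where `M` bounds the upper semicontinuous `L⁺` on a compact neighbourhood of the trace of `y`.
For `t ≠ θ(y)`, `t` eventually lies on the same side of `θ(yⁿ)` as of `θ(y)`, so upper
semicontinuity bounds the pointwise limsup of the integrands by `1_{(0, θ(y)]}(t) L⁺(y_t)`.
The reverse Fatou lemma concludes.
-/

open Set Filter MeasureTheory

noncomputable section

/-- First hitting time (after time `0`) of the set `Γ` by the path `y`. -/
def hitTime {d : ℕ} (Γ : Set (EuclideanSpace ℝ (Fin d)))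
    (y : ℝ → EuclideanSpace ℝ (Fin d)) : ℝ :=
  sInf {t : ℝ | 0 ≤ t ∧ y t ∈ Γ}

/-- Membership in the path space `𝒴`: 1-Lipschitz, hits `Γ` in finite time, and is
stopped at the hitting time. -/
def inPathSpace {d : ℕ} (Γ : Set (EuclideanSpace ℝ (Fin d)))
    (y : ℝ → EuclideanSpace ℝ (Fin d)) : Prop :=
  LipschitzWith 1 y ∧ (∃ t : ℝ, 0 ≤ t ∧ y t ∈ Γ) ∧
    ∀ t : ℝ, hitTime Γ y ≤ t → y t = y (hitTime Γ y)

open Topology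

theorem limsup_integral_le_integral_of_eventually_lt {α : Type*} [MeasurableSpace α]
    {μ : Measure α} {f : ℕ → α → ℝ} {g h : α → ℝ} (hf : ∀ n, Measurable (f n))
    (hf_nonneg : ∀ n, 0 ≤ᵐ[μ] f n) (hfg : ∀ᶠ n in atTop, f n ≤ᵐ[μ] g) (hg : Integrable g μ)
    (hh : Integrable h μ) (hh_nonneg : 0 ≤ᵐ[μ] h)
    (hlim : ∀ᵐ a ∂μ, ∀ c, h a < c → ∀ᶠ n in atTop, f n a < c) :
    limsup (fun n => ∫ a, f n a ∂μ) atTop ≤ ∫ a, h a ∂μ := by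
  have hf_eq : ∀ n, ∫ a, f n a ∂μ = (∫⁻ a, ENNReal.ofReal (f n a) ∂μ).toReal := fun n =>
    integral_eq_lintegral_of_nonneg_ae (hf_nonneg n) (hf n).aestronglyMeasurable
  obtain ⟨N, hN⟩ := eventually_atTop.1 hfg
  have hlimsup : ∀ᵐ a ∂μ,
      limsup (fun n => ENNReal.ofReal (f n a)) atTop ≤ ENNReal.ofReal (h a) := by
    filter_upwards [hlim] with a ha
    refine ENNReal.le_of_forall_pos_le_add fun ε hε _ => limsup_le_of_le (by isBoundedDefault) ?_
    filter_upwards [ha (h a + ε) (by simpa using hε)] with n hn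
    calc ENNReal.ofReal (f n a) ≤ ENNReal.ofReal (h a + ε) := ENNReal.ofReal_le_ofReal hn.le
      _ ≤ ENNReal.ofReal (h a) + ε := by
        simpa using ENNReal.ofReal_add_le (p := h a) (q := ε)
  -- `limsup_lintegral_le` needs domination at every index, so pass to the tail `n ≥ N`.
  have hfatou : limsup (fun n => ∫⁻ a, ENNReal.ofReal (f n a) ∂μ) atTop
      ≤ ∫⁻ a, ENNReal.ofReal (h a) ∂μ := by
    rw [← limsup_nat_add _ N]
    calc limsup (fun n => ∫⁻ a, ENNReal.ofReal (f (n + N) a) ∂μ) atTop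
        ≤ ∫⁻ a, limsup (fun n => ENNReal.ofReal (f (n + N) a)) atTop ∂μ :=
          limsup_lintegral_le _ (fun n => ENNReal.measurable_ofReal.comp (hf _))
            (fun n => (hN _ (Nat.le_add_left N n)).mono fun a ha => ENNReal.ofReal_le_ofReal ha)
            hg.lintegral_lt_top.ne
      _ ≤ ∫⁻ a, ENNReal.ofReal (h a) ∂μ := lintegral_mono_ae <| hlimsup.mono fun a ha => by
          rwa [limsup_nat_add (fun n => ENNReal.ofReal (f n a))]
  refine le_of_forall_gt_imp_ge_of_dense fun c hc => ?_
  have hlt : limsup (fun n => ∫⁻ a, ENNReal.ofReal (f n a) ∂μ) atTop < ENNReal.ofReal c := by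
    refine hfatou.trans_lt ?_
    rwa [← ofReal_integral_eq_lintegral_ofReal hh hh_nonneg,
      ENNReal.ofReal_lt_ofReal_iff (hc.trans_le' (integral_nonneg_of_ae hh_nonneg))]
  refine limsup_le_of_le
    (isCoboundedUnder_le_of_le atTop fun n => integral_nonneg_of_ae (hf_nonneg n))
    ((eventually_lt_of_limsup_lt hlt).mono fun n hn => ?_)
  rw [hf_eq]
  exact (ENNReal.toReal_lt_of_lt_ofReal hn).le

theorem Filter.Tendsto.eventually_mem_Ioc_iff {ι : Type*} {l : Filter ι} {a : ι → ℝ} {b t : ℝ}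
    (ha : Tendsto a l (𝓝 b)) (ht : t ≠ b) :
    ∀ᶠ i in l, (t ∈ Ioc 0 (a i) ↔ t ∈ Ioc 0 b) := by
  rcases ht.lt_or_gt with htb | hbt
  · filter_upwards [ha.eventually_const_lt htb] with i hi
    simp only [mem_Ioc, hi.le, htb.le, and_true]
  · filter_upwards [ha.eventually_lt_const hbt] with i hi
    simp only [mem_Ioc, not_le.2 hi, not_le.2 hbt, and_false]

theorem eventually_indicator_Ioc_comp_lt {ι E : Type*} [TopologicalSpace E] {l : Filter ι}
    {φ : E → ℝ} (hφ : UpperSemicontinuous φ) {z : ι → ℝ → E} {w : ℝ → E} {a : ι → ℝ}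
    {b t c : ℝ} (hzw : Tendsto (fun i => z i t) l (𝓝 (w t))) (ha : Tendsto a l (𝓝 b))
    (ht : t ≠ b) (hc : (Ioc 0 b).indicator (φ ∘ w) t < c) :
    ∀ᶠ i in l, (Ioc 0 (a i)).indicator (φ ∘ z i) t < c := by
  by_cases htb : t ∈ Ioc 0 b
  · rw [indicator_of_mem htb] at hc
    filter_upwards [ha.eventually_mem_Ioc_iff ht, hzw.eventually (hφ _ c hc)] with i hi hlt
    rwa [indicator_of_mem (hi.2 htb)]
  · rw [indicator_of_notMem htb] at hc
    filter_upwards [ha.eventually_mem_Ioc_iff ht] with i hi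
    rwa [indicator_of_notMem (mt hi.1 htb)]

theorem indicator_Ioc_comp_le_of_dist_le {E : Type*} [PseudoMetricSpace E] {φ : E → ℝ}
    {v w : ℝ → E} {r s T M : ℝ} (hM : ∀ x ∈ Metric.cthickening r (w '' Icc 0 T), φ x ≤ M)
    (hM_nonneg : 0 ≤ M) (hv : ∀ t ∈ Icc 0 T, dist (w t) (v t) ≤ r) (hs : s ≤ T) :
    (Ioc 0 s).indicator (φ ∘ v) ≤ (Ioc 0 T).indicator fun _ => M := by
  intro t
  by_cases hts : t ∈ Ioc 0 s
  · have htT : t ∈ Icc 0 T := ⟨hts.1.le, hts.2.trans hs⟩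
    rw [indicator_of_mem hts, indicator_of_mem (Ioc_subset_Ioc_right hs hts)]
    refine hM _ (Metric.mem_cthickening_of_dist_le _ _ _ _ (mem_image_of_mem w htT) ?_)
    rw [dist_comm]
    exact hv t htT
  · rw [indicator_of_notMem hts]
    exact indicator_nonneg (fun _ _ => hM_nonneg) _

theorem limsup_intervalIntegral_le_of_tendstoLocallyUniformly {E : Type*} [MetricSpace E]
    [ProperSpace E] {φ : E → ℝ} (hφ : UpperSemicontinuous φ) (hφ_nonneg : ∀ x, 0 ≤ φ x)
    {z : ℕ → ℝ → E} {w : ℝ → E} (hz : ∀ n, Continuous (z n))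
    (hzw : TendstoLocallyUniformly z w atTop) {a : ℕ → ℝ} {b : ℝ} (ha_nonneg : ∀ n, 0 ≤ a n)
    (ha : Tendsto a atTop (𝓝 b)) :
    limsup (fun n => ∫ t in (0 : ℝ)..a n, φ (z n t)) atTop ≤ ∫ t in (0 : ℝ)..b, φ (w t) := by
  have hb_nonneg : 0 ≤ b := ge_of_tendsto' ha ha_nonneg
  have hw : Continuous w := hzw.continuous (Frequently.of_forall hz)
  have hint : ∀ (s : ℝ) (v : ℝ → E), 0 ≤ s →
      ∫ t in (0 : ℝ)..s, φ (v t) = ∫ t, (Ioc 0 s).indicator (φ ∘ v) t := fun s v hs => by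
    rw [intervalIntegral.integral_of_le hs, integral_indicator measurableSet_Ioc]; rfl
  simp only [hint _ _ (ha_nonneg _), hint _ _ hb_nonneg]
  have hmeas : ∀ (s : ℝ) (v : ℝ → E), Continuous v → Measurable ((Ioc 0 s).indicator (φ ∘ v)) :=
    fun s v hv => (hφ.comp hv).measurable.indicator measurableSet_Ioc
  have hnonneg : ∀ (s : ℝ) (v : ℝ → E), 0 ≤ (Ioc 0 s).indicator (φ ∘ v) :=
    fun s v => indicator_nonneg fun t _ => hφ_nonneg (v t)
  set T := b + 1
  obtain ⟨M, hM⟩ := (hφ.upperSemicontinuousOn _).bddAbove_of_isCompact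
    ((isCompact_Icc.image hw).cthickening (r := 1) (s := w '' Icc 0 T))
  replace hM : ∀ x ∈ Metric.cthickening 1 (w '' Icc 0 T), φ x ≤ M :=
    fun x hx => hM (mem_image_of_mem φ hx)
  have hM_nonneg : 0 ≤ M := (hφ_nonneg (w 0)).trans <| hM _ <|
    Metric.self_subset_cthickening _ (mem_image_of_mem w ⟨le_rfl, by positivity⟩)
  have hg : Integrable ((Ioc 0 T).indicator fun _ => M) :=
    (integrableOn_const measure_Ioc_lt_top.ne).integrable_indicator measurableSet_Ioc
  refine limsup_integral_le_integral_of_eventually_lt (fun n => hmeas _ _ (hz n))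
    (fun n => ae_of_all _ (hnonneg _ _)) ?_ hg ?_ (ae_of_all _ (hnonneg _ _)) ?_
  · have hzw_T : TendstoUniformlyOn z w atTop (Icc 0 T) :=
      tendstoLocallyUniformly_iff_forall_isCompact.1 hzw _ isCompact_Icc
    filter_upwards [ha.eventually_lt_const (lt_add_one b),
      Metric.tendstoUniformlyOn_iff.1 hzw_T 1 one_pos] with n hn hzn
    exact ae_of_all _
      (indicator_Ioc_comp_le_of_dist_le hM hM_nonneg (fun t ht => (hzn t ht).le) hn.le)
  · refine hg.mono' (hmeas _ _ hw).aestronglyMeasurable (ae_of_all _ fun t => ?_)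
    rw [Real.norm_of_nonneg (hnonneg b w t)]
    exact indicator_Ioc_comp_le_of_dist_le hM hM_nonneg (fun t _ => by simp) (lt_add_one b).le t
  · filter_upwards [volume.ae_ne b] with t ht c hc
    exact eventually_indicator_Ioc_comp_lt hφ
      ((tendstoLocallyUniformlyOn_univ.2 hzw).tendsto_at (mem_univ t)) ha ht hc

theorem hitTime_nonneg {d : ℕ} (Γ : Set (EuclideanSpace ℝ (Fin d)))
    (y : ℝ → EuclideanSpace ℝ (Fin d)) : 0 ≤ hitTime Γ y :=
  Real.sInf_nonneg fun _ ht => ht.1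

theorem stmt4_general {d : ℕ} (Γ : Set (EuclideanSpace ℝ (Fin d)))
    (L : EuclideanSpace ℝ (Fin d) → ℝ)
    (hLusc : UpperSemicontinuous L)
    (y : ℕ → ℝ → EuclideanSpace ℝ (Fin d)) (ylim : ℝ → EuclideanSpace ℝ (Fin d))
    (hy : ∀ n, inPathSpace Γ (y n))
    (hunif : TendstoUniformly y ylim atTop)
    (hθ : Tendsto (fun n => hitTime Γ (y n)) atTop (nhds (hitTime Γ ylim))) :
    limsup (fun n => ∫ t in (0:ℝ)..hitTime Γ (y n), max (L (y n t)) 0) atTop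
      ≤ ∫ t in (0:ℝ)..hitTime Γ ylim, max (L (ylim t)) 0 :=
  limsup_intervalIntegral_le_of_tendstoLocallyUniformly
    (hLusc.sup upperSemicontinuous_const) (fun _ => le_max_right _ _)
    (fun n => (hy n).1.continuous) hunif.tendstoLocallyUniformly
    (fun n => hitTime_nonneg Γ (y n)) hθ

theorem stmt4 {d : ℕ} (Γ : Set (EuclideanSpace ℝ (Fin d)))
    (hΓne : Γ.Nonempty) (hΓcl : IsClosed Γ)
    (L : EuclideanSpace ℝ (Fin d) → ℝ)
    (hLusc : UpperSemicontinuous L)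
    (y : ℕ → ℝ → EuclideanSpace ℝ (Fin d)) (ylim : ℝ → EuclideanSpace ℝ (Fin d))
    (hy : ∀ n, inPathSpace Γ (y n)) (hylim : inPathSpace Γ ylim)
    (hunif : TendstoUniformly y ylim atTop)
    (hθ : Tendsto (fun n => hitTime Γ (y n)) atTop (nhds (hitTime Γ ylim))) :
    limsup (fun n => ∫ t in (0:ℝ)..hitTime Γ (y n), max (L (y n t)) 0) atTop
      ≤ ∫ t in (0:ℝ)..hitTime Γ ylim, max (L (ylim t)) 0 :=
  stmt4_general Γ L hLusc y ylim hy hunif hθ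
end
end

section
/- Let d ≥ 2, 0 < R₀, γ > 0, V₀ ≥ 0, and u : [R₀,∞) → ℝ continuous. Define F(r) := (γ+V₀)R₀^{d−1} − ∫_{R₀}^r (1+u(z)) z^{d−1} dz − γ r^{d−1} and, on the interval where F > 0, set w(x) := ∫_{R₀}^{|x|} r^{d−1} / F(r) dr for |x| > R₀. Then the radial function w ∈ C¹ on {R₀ < |x| < R*}, where R* is the first zero of F after R₀, ∇w(x) = (|x|^{d−1}/F(|x|)) · x/|x|, and w satisfies div(∇w/|∇w|² + γ ∇w/|∇w|) = −(u(|x|)+1) pointwise on {R₀ < |x| < R*}. -/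
/-!
Write `r = ‖x‖`. Since `w = G ∘ ‖·‖` with `G' r = r ^ (d - 1) / F r > 0`, the gradient is
`(G' r / r) • x`, and the field `∇w / |∇w|² + γ ∇w / |∇w| = ((1 / G' r + γ) / r) • x` equals
`(N r / r ^ d) • x`, where `N r = F r + γ r ^ (d - 1)` is
`(γ + V₀) R₀ ^ (d - 1) - ∫_{R₀}^r (1 + u z) z ^ (d - 1) dz`.
A radial field `(N r / r ^ d) • x` on `ℝ^d` has divergence `N' r / r ^ (d - 1)`, which is
`-(1 + u r)` by the fundamental theorem of calculus.
-/

open Set Filter MeasureTheory intervalIntegral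

noncomputable section

/-- Divergence of a vector field on Euclidean space, computed coordinatewise. -/
def divg {d : ℕ} (F : EuclideanSpace ℝ (Fin d) → EuclideanSpace ℝ (Fin d))
    (x : EuclideanSpace ℝ (Fin d)) : ℝ :=
  ∑ i, (fderiv ℝ F x (EuclideanSpace.single i 1)) i

open Topology

section Radial

variable {E : Type*} [NormedAddCommGroup E] [InnerProductSpace ℝ E] {G : ℝ → ℝ} {g : ℝ} {x : E}

theorem HasDerivAt.hasFDerivAt_comp_norm (hG : HasDerivAt G g ‖x‖) (hx : x ≠ 0) :
    HasFDerivAt (fun y : E => G ‖y‖) ((g / ‖x‖) • innerSL ℝ x) x := by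
  have hr : 0 < ‖x‖ := norm_pos_iff.2 hx
  -- `G ‖y‖ = (G ∘ √) (‖y‖ ^ 2)`, and `‖·‖ ^ 2` is smooth everywhere
  have hsqrt : HasDerivAt (G ∘ Real.sqrt) (g * (1 / (2 * ‖x‖))) (‖x‖ ^ 2) := by
    have h := Real.hasDerivAt_sqrt (pow_pos hr 2).ne'
    rw [Real.sqrt_sq hr.le] at h
    exact HasDerivAt.comp _ (by rwa [Real.sqrt_sq hr.le]) h
  have h := hsqrt.comp_hasFDerivAt x (hasStrictFDerivAt_norm_sq x).hasFDerivAt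
  have hcomp : ((G ∘ Real.sqrt) ∘ fun y : E => ‖y‖ ^ 2) = fun y => G ‖y‖ := by
    funext y; simp [Real.sqrt_sq (norm_nonneg y)]
  rw [hcomp] at h
  refine h.congr_fderiv ?_
  ext v
  simp only [smul_apply, coe_innerSL_apply, nsmul_eq_mul, Nat.cast_ofNat,
    smul_eq_mul]
  field_simp

theorem HasDerivAt.hasGradientAt_comp_norm [CompleteSpace E] (hG : HasDerivAt G g ‖x‖)
    (hx : x ≠ 0) : HasGradientAt (fun y : E => G ‖y‖) ((g / ‖x‖) • x) x := by
  rw [hasGradientAt_iff_hasFDerivAt, map_smul]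
  exact hG.hasFDerivAt_comp_norm hx

theorem ContDiffOn.comp_norm {n : WithTop ℕ∞} {s : Set ℝ} (hG : ContDiffOn ℝ n G s)
    (hs : (0 : ℝ) ∉ s) : ContDiffOn ℝ n (fun y : E => G ‖y‖) ((‖·‖) ⁻¹' s) := fun y hy =>
  have hy0 : y ≠ 0 := by rintro rfl; exact hs (by simpa using hy)
  (hG _ hy).comp y (contDiffAt_norm ℝ hy0).contDiffWithinAt fun _ h => h

theorem inv_norm_sq_smul_add_div_norm_smul {c : ℝ} (hc : 0 < c) (γ : ℝ) (x : E) :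
    (‖c • x‖ ^ 2)⁻¹ • (c • x) + (γ / ‖c • x‖) • (c • x) = ((c⁻¹ / ‖x‖ + γ) / ‖x‖) • x := by
  rcases eq_or_ne x 0 with rfl | hx
  · simp
  have hr : 0 < ‖x‖ := norm_pos_iff.2 hx
  rw [smul_smul, smul_smul, ← add_smul, norm_smul, Real.norm_of_nonneg hc.le]
  congr 1
  field_simp

end Radial

section Primitive

variable {f : ℝ → ℝ} {a b : ℝ}

theorem hasDerivAt_integral_of_continuousOn_Ico (hf : ContinuousOn f (Ico a b)) {t : ℝ}
    (ht : t ∈ Ioo a b) : HasDerivAt (fun s => ∫ z in a..s, f z) (f t) t := by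
  have hIoo : ContinuousOn f (Ioo a b) := hf.mono Ioo_subset_Ico_self
  refine integral_hasDerivAt_right ?_ (hIoo.stronglyMeasurableAtFilter isOpen_Ioo t ht)
    (hIoo.continuousAt (isOpen_Ioo.mem_nhds ht))
  refine (hf.mono ?_).intervalIntegrable
  rw [uIcc_of_le ht.1.le]
  exact Icc_subset_Ico_right ht.2

theorem contDiffOn_one_integral_of_continuousOn_Ico (hf : ContinuousOn f (Ico a b)) :
    ContDiffOn ℝ 1 (fun s => ∫ z in a..s, f z) (Ioo a b) := by
  rw [contDiffOn_one_iff_derivWithin (isOpen_Ioo.uniqueDiffOn)]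
  refine ⟨fun t ht => (hasDerivAt_integral_of_continuousOn_Ico hf ht).differentiableAt
    |>.differentiableWithinAt, (hf.mono Ioo_subset_Ico_self).congr fun t ht => ?_⟩
  rw [derivWithin_of_isOpen isOpen_Ioo ht, (hasDerivAt_integral_of_continuousOn_Ico hf ht).deriv]

end Primitive

section Divergence

variable {d : ℕ} {x : EuclideanSpace ℝ (Fin d)}

theorem EuclideanSpace.dim_ne_zero_of_ne_zero (hx : x ≠ 0) : d ≠ 0 := by
  rintro rfl
  exact hx (Subsingleton.elim _ _)

theorem inv_norm_sq_smul_add_div_norm_smul_pow {a : ℝ} (ha : 0 < a) (γ : ℝ) (hx : x ≠ 0) :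
    (‖(‖x‖ ^ (d - 1) / a / ‖x‖) • x‖ ^ 2)⁻¹ • ((‖x‖ ^ (d - 1) / a / ‖x‖) • x)
      + (γ / ‖(‖x‖ ^ (d - 1) / a / ‖x‖) • x‖) • ((‖x‖ ^ (d - 1) / a / ‖x‖) • x)
      = ((a + γ * ‖x‖ ^ (d - 1)) / ‖x‖ ^ d) • x := by
  have hr : 0 < ‖x‖ := norm_pos_iff.2 hx
  rw [inv_norm_sq_smul_add_div_norm_smul (by positivity),
    ← pow_sub_one_mul (EuclideanSpace.dim_ne_zero_of_ne_zero hx)]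
  congr 1
  field_simp

theorem divg_congr {V W : EuclideanSpace ℝ (Fin d) → EuclideanSpace ℝ (Fin d)}
    (h : V =ᶠ[𝓝 x] W) : divg V x = divg W x := by
  rw [divg, divg, h.fderiv_eq]

theorem divg_radial {h : ℝ → ℝ} {h' : ℝ} (hh : HasDerivAt h h' ‖x‖) (hx : x ≠ 0) :
    divg (fun y => h ‖y‖ • y) x = d * h ‖x‖ + ‖x‖ * h' := by
  have hr : ‖x‖ ≠ 0 := norm_ne_zero_iff.2 hx
  have hV : HasFDerivAt (fun y => h ‖y‖ • y) (h ‖x‖ • ContinuousLinearMap.id ℝ _ +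
      ((h' / ‖x‖) • innerSL ℝ x).smulRight x) x :=
    (hh.hasFDerivAt_comp_norm hx).smul (hasFDerivAt_id x)
  have hcoord : ∀ i, fderiv ℝ (fun y => h ‖y‖ • y) x (EuclideanSpace.single i 1) i
      = h ‖x‖ + h' / ‖x‖ * x i ^ 2 := by
    intro i
    simp [hV.fderiv, EuclideanSpace.inner_single_right, sq, mul_assoc]
  rw [divg]
  simp only [hcoord, Finset.sum_add_distrib, ← Finset.mul_sum, ← EuclideanSpace.real_norm_sq_eq]
  simp only [Finset.sum_const, Finset.card_univ, Fintype.card_fin, nsmul_eq_mul]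
  field_simp

theorem divg_radial_div_pow {N : ℝ → ℝ} {N' : ℝ} (hN : HasDerivAt N N' ‖x‖) (hx : x ≠ 0) :
    divg (fun y => (N ‖y‖ / ‖y‖ ^ d) • y) x = N' / ‖x‖ ^ (d - 1) := by
  have hr : 0 < ‖x‖ := norm_pos_iff.2 hx
  obtain ⟨k, rfl⟩ : ∃ k, d = k + 1 :=
    Nat.exists_eq_succ_of_ne_zero (EuclideanSpace.dim_ne_zero_of_ne_zero hx)
  rw [divg_radial (hN.fun_div (hasDerivAt_pow _ _) (by positivity)) hx]
  field_simp
  push_cast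
  ring

end Divergence

theorem stmt11_general (d : ℕ) (R₀ γ V₀ : ℝ) (hR : 0 < R₀)
    (u : ℝ → ℝ) (hu : Continuous u)
    (F : ℝ → ℝ)
    (hF : ∀ r, F r = (γ + V₀) * R₀ ^ (d - 1)
      - (∫ z in R₀..r, (1 + u z) * z ^ (d - 1)) - γ * r ^ (d - 1))
    (Rstar : ℝ)
    (hFpos : ∀ r, R₀ ≤ r → r < Rstar → 0 < F r)
    (w : EuclideanSpace ℝ (Fin d) → ℝ)
    (hw : ∀ x, w x = ∫ r in R₀..‖x‖, r ^ (d - 1) / F r) :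
    ContDiffOn ℝ 1 w {x | R₀ < ‖x‖ ∧ ‖x‖ < Rstar} ∧
    (∀ x : EuclideanSpace ℝ (Fin d), R₀ < ‖x‖ → ‖x‖ < Rstar →
      gradient w x = ((‖x‖ ^ (d - 1) / F ‖x‖) / ‖x‖) • x) ∧
    (∀ x : EuclideanSpace ℝ (Fin d), R₀ < ‖x‖ → ‖x‖ < Rstar →
      divg (fun y => (‖gradient w y‖ ^ 2)⁻¹ • gradient w y
          + (γ / ‖gradient w y‖) • gradient w y) x = -(u ‖x‖ + 1)) := by
  set N : ℝ → ℝ := fun r => (γ + V₀) * R₀ ^ (d - 1) - ∫ z in R₀..r, (1 + u z) * z ^ (d - 1)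
  have hFN : ∀ r, F r + γ * r ^ (d - 1) = N r := fun r => by rw [hF]; ring
  have hN : ∀ r, HasDerivAt N (-((1 + u r) * r ^ (d - 1))) r := fun r =>
    ((hu.const_add 1).mul (continuous_pow _)).integral_hasStrictDerivAt R₀ r
      |>.hasDerivAt |>.const_sub _
  have hFcont : Continuous F := by
    have hFN' : F = fun r => N r - γ * r ^ (d - 1) := funext fun r => by rw [← hFN]; ring
    exact hFN' ▸ (continuous_iff_continuousAt.2 fun r => (hN r).continuousAt).sub (by fun_prop)
  have hφ : ContinuousOn (fun r => r ^ (d - 1) / F r) (Ico R₀ Rstar) :=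
    (continuous_pow _).continuousOn.div hFcont.continuousOn fun r hr => (hFpos r hr.1 hr.2).ne'
  set S : Set (EuclideanSpace ℝ (Fin d)) := (‖·‖) ⁻¹' Ioo R₀ Rstar
  have hw' : w = fun y => ∫ r in R₀..‖y‖, r ^ (d - 1) / F r := funext hw
  have hgrad : ∀ x ∈ S, HasGradientAt w ((‖x‖ ^ (d - 1) / F ‖x‖ / ‖x‖) • x) x := fun x hx =>
    hw' ▸ (hasDerivAt_integral_of_continuousOn_Ico hφ hx).hasGradientAt_comp_norm
      (norm_pos_iff.1 (hR.trans hx.1))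
  have hfield : ∀ x ∈ S, (‖gradient w x‖ ^ 2)⁻¹ • gradient w x
      + (γ / ‖gradient w x‖) • gradient w x = (N ‖x‖ / ‖x‖ ^ d) • x := fun x hx => by
    rw [(hgrad x hx).gradient, inv_norm_sq_smul_add_div_norm_smul_pow (hFpos _ hx.1.le hx.2) γ
      (norm_pos_iff.1 (hR.trans hx.1)), hFN]
  refine ⟨?_, fun x h₁ h₂ => (hgrad x ⟨h₁, h₂⟩).gradient, fun x h₁ h₂ => ?_⟩
  · rw [hw']
    exact (contDiffOn_one_integral_of_continuousOn_Ico hφ).comp_norm fun h => hR.not_ge h.1.le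
  · have hr : 0 < ‖x‖ := hR.trans h₁
    have hS : S ∈ 𝓝 x := (isOpen_Ioo.preimage continuous_norm).mem_nhds ⟨h₁, h₂⟩
    rw [divg_congr (eventually_of_mem hS hfield), divg_radial_div_pow (hN _) (norm_pos_iff.1 hr)]
    field_simp
    ring

theorem stmt11 (d : ℕ) (hd : 2 ≤ d) (R₀ γ V₀ : ℝ) (hR : 0 < R₀) (hγ : 0 < γ) (hV : 0 ≤ V₀)
    (u : ℝ → ℝ) (hu : Continuous u)
    (F : ℝ → ℝ)
    (hF : ∀ r, F r = (γ + V₀) * R₀ ^ (d - 1)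
      - (∫ z in R₀..r, (1 + u z) * z ^ (d - 1)) - γ * r ^ (d - 1))
    (Rstar : ℝ) (hRs : R₀ < Rstar)
    (hFpos : ∀ r, R₀ ≤ r → r < Rstar → 0 < F r)
    (w : EuclideanSpace ℝ (Fin d) → ℝ)
    (hw : ∀ x, w x = ∫ r in R₀..‖x‖, r ^ (d - 1) / F r) :
    ContDiffOn ℝ 1 w {x | R₀ < ‖x‖ ∧ ‖x‖ < Rstar} ∧
    (∀ x : EuclideanSpace ℝ (Fin d), R₀ < ‖x‖ → ‖x‖ < Rstar →
      gradient w x = ((‖x‖ ^ (d - 1) / F ‖x‖) / ‖x‖) • x) ∧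
    (∀ x : EuclideanSpace ℝ (Fin d), R₀ < ‖x‖ → ‖x‖ < Rstar →
      divg (fun y => (‖gradient w y‖ ^ 2)⁻¹ • gradient w y
          + (γ / ‖gradient w y‖) • gradient w y) x = -(u ‖x‖ + 1)) :=
  stmt11_general d R₀ γ V₀ hR u hu F hF Rstar hFpos w hw
end
end

section
/- Let f : ℝ^d → ℝ be locally Lipschitz, α ∈ ℝ^d a unit vector, and suppose g : ℝ^d → [0,∞) is upper semicontinuous with f(x + tα) ≤ f(x) + ∫₀^t g(x + zα) dz for all x in an open set U and t ≥ 0 small enough that the segment stays in U. Then |∂_α f(x)| ≤ g(x) for Lebesgue-a.e. x ∈ U (whenever the directional derivative exists), and consequently |∇f| ≤ g Lebesgue-a.e. on U. -/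
/-! The bound holds at every point of differentiability, not merely almost everywhere. Along the
line `t ↦ x + t • α`, upper semicontinuity makes `g ≤ c` near `x` for any `c > g x`, so the
hypothesis bounds the right difference quotients of `f` by `c`, and hence `∂_α f x ≤ g x`.
Applying this to `±α` bounds `|∂_α f x|`, and the gradient's norm is the supremum of these over
unit vectors `α`. -/

open Set Filter MeasureTheory intervalIntegral Topology

theorem eventually_forall_Icc_of_eventually_nhds {X : Type*} [TopologicalSpace X] [LinearOrder X]
    [OrderTopology X] {P : X → Prop} {a : X} (h : ∀ᶠ s in 𝓝 a, P s) :
    ∀ᶠ t in 𝓝 a, ∀ s ∈ Icc a t, P s :=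
  (tendsto_const_nhds.Icc tendsto_id).eventually h.smallSets

theorem eventually_forall_Icc_add_smul_mem {E : Type*} [NormedAddCommGroup E] [NormedSpace ℝ E]
    {U : Set E} (hU : IsOpen U) {x : E} (hx : x ∈ U) (α : E) :
    ∀ᶠ t in 𝓝 (0 : ℝ), ∀ s ∈ Icc 0 t, x + s • α ∈ U := by
  refine eventually_forall_Icc_of_eventually_nhds ?_
  have hcont : Continuous fun s : ℝ => x + s • α := by fun_prop
  exact hcont.continuousAt.preimage_mem_nhds (by simpa using hU.mem_nhds hx)

theorem intervalIntegral_le_mul_of_eventually_le {h : ℝ → ℝ} {a c : ℝ} (hc : 0 ≤ c)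
    (hh : ∀ᶠ z in 𝓝 a, h z ≤ c) : ∀ᶠ t in 𝓝[≥] a, ∫ z in a..t, h z ≤ (t - a) * c := by
  filter_upwards [self_mem_nhdsWithin,
    nhdsWithin_le_nhds (eventually_forall_Icc_of_eventually_nhds hh)] with t (hat : a ≤ t) hle
  by_cases hint : IntervalIntegrable h volume a t
  · calc ∫ z in a..t, h z ≤ ∫ _ in a..t, c :=
          integral_mono_on hat hint intervalIntegrable_const hle
      _ = (t - a) * c := by rw [intervalIntegral.integral_const, smul_eq_mul]
  · rw [integral_undef hint]
    exact mul_nonneg (sub_nonneg.2 hat) hc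

theorem HasDerivWithinAt.le_of_eventually_le_add_mul {φ : ℝ → ℝ} {a φ' c : ℝ}
    (hφ : HasDerivWithinAt φ φ' (Ioi a) a)
    (hle : ∀ᶠ t in 𝓝[>] a, φ t ≤ φ a + (t - a) * c) : φ' ≤ c := by
  have hslope : Tendsto (slope φ a) (𝓝[>] a) (𝓝 φ') := by
    simpa using hasDerivWithinAt_iff_tendsto_slope.1 hφ
  refine le_of_tendsto hslope ?_
  filter_upwards [self_mem_nhdsWithin, hle] with t (hat : a < t) ht
  rw [slope_def_field, div_le_iff₀ (sub_pos.2 hat)]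
  linarith

theorem fderiv_apply_le_of_le_add_integral {E : Type*} [NormedAddCommGroup E] [NormedSpace ℝ E]
    {f g : E → ℝ} {x α : E} (hf : DifferentiableAt ℝ f x) (hg : UpperSemicontinuousAt g x)
    (hgx : 0 ≤ g x)
    (hle : ∀ᶠ t in 𝓝[>] 0, f (x + t • α) ≤ f x + ∫ z in (0 : ℝ)..t, g (x + z • α)) :
    fderiv ℝ f x α ≤ g x := by
  refine le_of_forall_gt_imp_ge_of_dense fun c hc => ?_
  have hline : HasDerivAt (fun t : ℝ => x + t • α) α 0 := by
    simpa using ((hasDerivAt_id (0 : ℝ)).smul_const α).const_add x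
  have hφ : HasDerivAt (fun t : ℝ => f (x + t • α)) (fderiv ℝ f x α) 0 := by
    have hfx : HasFDerivAt f (fderiv ℝ f x) (x + (0 : ℝ) • α) := by simpa using hf.hasFDerivAt
    exact hfx.comp_hasDerivAt 0 hline
  have hgc : ∀ᶠ z in 𝓝 (0 : ℝ), g (x + z • α) ≤ c :=
    (hline.continuousAt.tendsto.eventually (by simpa using hg c hc)).mono fun _ => le_of_lt
  have hint := intervalIntegral_le_mul_of_eventually_le (hgx.trans hc.le) hgc
  refine hφ.hasDerivWithinAt.le_of_eventually_le_add_mul ?_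
  filter_upwards [hle, nhdsWithin_mono _ Ioi_subset_Ici_self hint] with t hft hit
  simp only [zero_smul, add_zero, sub_zero] at hft hit ⊢
  linarith

theorem norm_gradient_le_of_forall_norm_eq_one {F : Type*} [NormedAddCommGroup F]
    [InnerProductSpace ℝ F] [CompleteSpace F] {f : F → ℝ} {x : F} {C : ℝ} (hC : 0 ≤ C)
    (h : ∀ α, ‖α‖ = 1 → |fderiv ℝ f x α| ≤ C) : ‖gradient f x‖ ≤ C := by
  rw [gradient, LinearIsometryEquiv.norm_map]
  exact ContinuousLinearMap.opNorm_le_of_unit_norm hC h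

theorem stmt16_general {d : ℕ} (f : EuclideanSpace ℝ (Fin d) → ℝ)
    (g : EuclideanSpace ℝ (Fin d) → ℝ) (hg : UpperSemicontinuous g) (hg0 : ∀ x, 0 ≤ g x)
    (U : Set (EuclideanSpace ℝ (Fin d))) (hU : IsOpen U)
    (hbound : ∀ α : EuclideanSpace ℝ (Fin d), ‖α‖ = 1 → ∀ x ∈ U, ∀ t : ℝ, 0 ≤ t →
      (∀ s ∈ Set.Icc (0:ℝ) t, x + s • α ∈ U) →
      f (x + t • α) ≤ f x + ∫ z in (0:ℝ)..t, g (x + z • α)) :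
    (∀ α : EuclideanSpace ℝ (Fin d), ‖α‖ = 1 →
      ∀ᵐ x ∂(volume.restrict U), DifferentiableAt ℝ f x → |fderiv ℝ f x α| ≤ g x) ∧
    ∀ᵐ x ∂(volume.restrict U), DifferentiableAt ℝ f x → ‖gradient f x‖ ≤ g x := by
  have hdir : ∀ α, ‖α‖ = 1 → ∀ x ∈ U, DifferentiableAt ℝ f x → fderiv ℝ f x α ≤ g x := by
    intro α hα x hx hfx
    refine fderiv_apply_le_of_le_add_integral hfx (hg x) (hg0 x) ?_
    filter_upwards [self_mem_nhdsWithin,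
      nhdsWithin_le_nhds (eventually_forall_Icc_add_smul_mem hU hx α)] with t (ht : 0 < t) hseg
    exact hbound α hα x hx t ht.le hseg
  have habs : ∀ α, ‖α‖ = 1 → ∀ x ∈ U, DifferentiableAt ℝ f x → |fderiv ℝ f x α| ≤ g x := by
    intro α hα x hx hfx
    have hneg := hdir (-α) (by rwa [norm_neg]) x hx hfx
    rw [map_neg] at hneg
    exact abs_le.2 ⟨by linarith, hdir α hα x hx hfx⟩
  refine ⟨fun α hα => ?_, ?_⟩ <;> filter_upwards [ae_restrict_mem hU.measurableSet] with x hx hfx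
  · exact habs α hα x hx hfx
  · exact norm_gradient_le_of_forall_norm_eq_one (hg0 x) fun α hα => habs α hα x hx hfx

theorem stmt16 {d : ℕ} (f : EuclideanSpace ℝ (Fin d) → ℝ) (hf : LocallyLipschitz f)
    (g : EuclideanSpace ℝ (Fin d) → ℝ) (hg : UpperSemicontinuous g) (hg0 : ∀ x, 0 ≤ g x)
    (U : Set (EuclideanSpace ℝ (Fin d))) (hU : IsOpen U)
    (hbound : ∀ α : EuclideanSpace ℝ (Fin d), ‖α‖ = 1 → ∀ x ∈ U, ∀ t : ℝ, 0 ≤ t →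
      (∀ s ∈ Set.Icc (0:ℝ) t, x + s • α ∈ U) →
      f (x + t • α) ≤ f x + ∫ z in (0:ℝ)..t, g (x + z • α)) :
    (∀ α : EuclideanSpace ℝ (Fin d), ‖α‖ = 1 →
      ∀ᵐ x ∂(volume.restrict U), DifferentiableAt ℝ f x → |fderiv ℝ f x α| ≤ g x) ∧
    ∀ᵐ x ∂(volume.restrict U), DifferentiableAt ℝ f x → ‖gradient f x‖ ≤ g x :=
  stmt16_general f g hg hg0 U hU hbound
end
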